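/- Let X be a random vector in R^d with E[X] = x, and let X̃ = clip_λ(X) where clip_λ(v) = min{1, λ/‖v‖}·v for v ≠ 0 and clip_λ(0) = 0. If ‖x‖ ≤ λ/2, then E[‖X̃ − x‖²] ≤ 10·E[‖X − x‖²]. -/

import Mathlib

/-
Clipping moves a vector `v` by exactly `max (‖v‖ - λ) 0`, and `‖v‖ - λ ≤ ‖v - x‖` as soon as
`‖x‖ ≤ λ`; so by the triangle inequality `‖clip_λ v - x‖ ≤ 2 ‖v - x‖` pointwise. Squaring gives
the bound with constant 4, which is then integrated.
-/

open MeasureTheory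
open scoped Classical

noncomputable def clip {E : Type*} [NormedAddCommGroup E] [NormedSpace ℝ E]
    (lam : ℝ) (v : E) : E :=
  if v = 0 then 0 else (min 1 (lam / ‖v‖)) • v

section Clip

variable {E : Type*} [NormedAddCommGroup E] [NormedSpace ℝ E]

theorem norm_clip_sub_self {lam : ℝ} (hlam : 0 ≤ lam) (v : E) :
    ‖clip lam v - v‖ = max (‖v‖ - lam) 0 := by
  unfold clip
  split_ifs with hv
  · simp [hv, hlam]
  have hv_pos : 0 < ‖v‖ := norm_pos_iff.mpr hv
  have hsmul : min 1 (lam / ‖v‖) • v - v = (min 1 (lam / ‖v‖) - 1) • v := by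
    rw [sub_smul, one_smul]
  rw [hsmul, norm_smul, Real.norm_eq_abs, abs_of_nonpos (by linarith [min_le_left 1 (lam / ‖v‖)])]
  rcases le_total ‖v‖ lam with hle | hlt
  · rw [min_eq_left ((one_le_div hv_pos).mpr hle), max_eq_right (by linarith)]
    ring
  · rw [min_eq_right ((div_le_one hv_pos).mpr hlt), max_eq_left (by linarith)]
    field_simp
    ring

theorem norm_clip_sub_le_two_mul {lam : ℝ} {x : E} (hx : ‖x‖ ≤ lam) (v : E) :
    ‖clip lam v - x‖ ≤ 2 * ‖v - x‖ := by
  have hmove : ‖clip lam v - v‖ ≤ ‖v - x‖ := by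
    rw [norm_clip_sub_self ((norm_nonneg x).trans hx)]
    exact max_le (by linarith [norm_sub_norm_le v x]) (norm_nonneg _)
  calc ‖clip lam v - x‖ ≤ ‖clip lam v - v‖ + ‖v - x‖ := norm_sub_le_norm_sub_add_norm_sub _ _ _
    _ ≤ 2 * ‖v - x‖ := by linarith

end Clip

theorem stmt_0_general {d : ℕ} {Ω : Type*} [MeasurableSpace Ω]
    (μ : Measure Ω)
    (X : Ω → EuclideanSpace ℝ (Fin d)) (x : EuclideanSpace ℝ (Fin d)) (lam : ℝ)
    (hX2 : Integrable (fun ω => ‖X ω - x‖ ^ 2) μ)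
    (hx : ‖x‖ ≤ lam / 2) :
    ∫ ω, ‖clip lam (X ω) - x‖ ^ 2 ∂μ ≤ 10 * ∫ ω, ‖X ω - x‖ ^ 2 ∂μ := by
  have hx' : ‖x‖ ≤ lam := by linarith [norm_nonneg x]
  have hpointwise : ∀ ω, ‖clip lam (X ω) - x‖ ^ 2 ≤ 10 * ‖X ω - x‖ ^ 2 := fun ω =>
    calc ‖clip lam (X ω) - x‖ ^ 2 ≤ (2 * ‖X ω - x‖) ^ 2 :=
          pow_le_pow_left₀ (norm_nonneg _) (norm_clip_sub_le_two_mul hx' (X ω)) 2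
      _ = 4 * ‖X ω - x‖ ^ 2 := by ring
      _ ≤ 10 * ‖X ω - x‖ ^ 2 := by gcongr; norm_num
  calc ∫ ω, ‖clip lam (X ω) - x‖ ^ 2 ∂μ ≤ ∫ ω, 10 * ‖X ω - x‖ ^ 2 ∂μ :=
        integral_mono_of_nonneg (ae_of_all _ fun _ => sq_nonneg _) (hX2.const_mul 10)
          (ae_of_all _ hpointwise)
    _ = 10 * ∫ ω, ‖X ω - x‖ ^ 2 ∂μ := integral_const_mul 10 _

theorem stmt_0 {d : ℕ} {Ω : Type*} [MeasurableSpace Ω]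
    (μ : Measure Ω) [IsProbabilityMeasure μ]
    (X : Ω → EuclideanSpace ℝ (Fin d)) (x : EuclideanSpace ℝ (Fin d)) (lam : ℝ)
    (hlam : 0 < lam)
    (hX : Integrable X μ)
    (hX2 : Integrable (fun ω => ‖X ω - x‖ ^ 2) μ)
    (hmean : ∫ ω, X ω ∂μ = x)
    (hx : ‖x‖ ≤ lam / 2) :
    ∫ ω, ‖clip lam (X ω) - x‖ ^ 2 ∂μ ≤ 10 * ∫ ω, ‖X ω - x‖ ^ 2 ∂μ :=
  stmt_0_general μ X x lam hX2 hx
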